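/- Every instance of axiom (5): ~□~□φ → □φ is valid in the Nmatrix M_{IvFDE_T5}, where □̃5 z = {u ∈ B_T : u1 = z2 and u3 = ¬z2}: for every valuation v over M_{IvFDE_T5}, the first coordinate of v(~□~□φ → □φ) equals 1. -/
import Mathlib


abbrev Snap := Bool × Bool × Bool × Bool

def BT (z : Snap) : Prop :=
  z.2.1 ≤ z.1 ∧ (z.1 && z.2.2.1) = false ∧ (z.2.1 && z.2.2.2) = false ∧ z.2.2.1 ≤ z.2.2.2

/-- Formulas over the signature {∧, ∨, →, ~, ¬, □}. -/
inductive Fm where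
  | var : ℕ → Fm
  | and : Fm → Fm → Fm
  | or : Fm → Fm → Fm
  | imp : Fm → Fm → Fm
  | snot : Fm → Fm   -- classical negation ~
  | pnot : Fm → Fm   -- paraconsistent negation ¬
  | box : Fm → Fm

/-- u ∈ z ∧̃ w -/
def memAnd (z w u : Snap) : Prop :=
  BT u ∧ u.1 = (z.1 && w.1) ∧ u.2.1 = (z.2.1 && w.2.1) ∧ u.2.2.2 = (z.2.2.2 || w.2.2.2) ∧
    (z.2.2.1 || w.2.2.1) ≤ u.2.2.1 ∧ u.2.2.1 ≤ ((!z.2.1 || w.2.2.1) && (!w.2.1 || z.2.2.1))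

/-- u ∈ z ∨̃ w -/
def memOr (z w u : Snap) : Prop :=
  BT u ∧ u.1 = (z.1 || w.1) ∧ u.2.2.1 = (z.2.2.1 && w.2.2.1) ∧ u.2.2.2 = (z.2.2.2 && w.2.2.2) ∧
    (z.2.1 || w.2.1) ≤ u.2.1 ∧ u.2.1 ≤ ((!z.2.2.1 || w.2.1) && (!w.2.2.1 || z.2.1))

/-- u ∈ z →̃ w -/
def memImp (z w u : Snap) : Prop :=
  BT u ∧ u.1 = (!z.1 || w.1) ∧ u.2.2.1 = (z.2.1 && w.2.2.1) ∧ u.2.2.2 = (z.1 && w.2.2.2) ∧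
    (z.2.2.1 || w.2.1) ≤ u.2.1 ∧ u.2.1 ≤ ((!z.2.1 || w.2.1) && (!w.2.2.1 || z.2.2.1))

/-- u ∈ ~̃ z -/
def memSnot (z u : Snap) : Prop :=
  BT u ∧ u.1 = !z.1 ∧ u.2.1 = z.2.2.1 ∧ u.2.2.1 = z.2.1 ∧ z.2.1 ≤ u.2.2.2 ∧ u.2.2.2 ≤ !z.2.2.1

/-- u ∈ ¬̃ z (singleton) -/
def memPnot (z u : Snap) : Prop :=
  u = (z.2.2.2, z.2.2.1, z.2.1, z.1)

/-- u ∈ □̃₅ z -/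
def memBox5 (z u : Snap) : Prop :=
  BT u ∧ u.1 = z.2.1 ∧ u.2.2.1 = !z.2.1

/-- A valuation over the 6-valued Nmatrix M_{IvFDE_T5}. -/
structure Val where
  v : Fm → Snap
  var_ok : ∀ n, BT (v (.var n))
  and_ok : ∀ φ ψ, memAnd (v φ) (v ψ) (v (.and φ ψ))
  or_ok : ∀ φ ψ, memOr (v φ) (v ψ) (v (.or φ ψ))
  imp_ok : ∀ φ ψ, memImp (v φ) (v ψ) (v (.imp φ ψ))
  snot_ok : ∀ φ, memSnot (v φ) (v (.snot φ))
  pnot_ok : ∀ φ, memPnot (v φ) (v (.pnot φ))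
  box_ok : ∀ φ, memBox5 (v φ) (v (.box φ))

theorem stmt_19 (V : Val) (φ : Fm) :
    (V.v (.imp (.snot (.box (.snot (.box φ)))) (.box φ))).1 = true := by
  obtain ⟨_, hb1, hb3⟩ := V.box_ok φ
  obtain ⟨_, hc1, hc2, hc3, _, _⟩ := V.snot_ok (.box φ)
  obtain ⟨_, hd1, hd3⟩ := V.box_ok (.snot (.box φ))
  obtain ⟨_, he1, he2, he3, _, _⟩ := V.snot_ok (.box (.snot (.box φ)))
  obtain ⟨_, hf1, _, _, _, _⟩ := V.imp_ok (.snot (.box (.snot (.box φ)))) (.box φ)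
  rw [hf1, he1, hd1, hc2, hb3, hb1]
  cases (V.v φ).2.1 <;> rfl
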